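/- arXiv:math/0411212 — 2 statements merged into one kernel-verified Lean document; each statement's English description precedes it below -/
import Mathlib

section
/- Let f : ℕ → ℝ be any function with f(N) → ∞ as N → ∞. Then there exists N₀ such that for all N ≥ N₀ and all integers i with f(N) ≤ i ≤ N−1, the threshold sequence satisfies t_i^{(N)} ≤ (i + √i)/√(N − i + 3). -/
open Filter Real

/-- Auxiliary backwards recurrence: `tAux N n` equals `t_{N-1-n}^{(N)}`, where
`t_{N-1} = N/2` and `t_{i-1} = (s_i²(s_i+1) + 2(i² − s_i²) t_i) / (2 i (i+1))`
with `s_i = ⌊t_i⌋`. -/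
noncomputable def tAux (N : ℕ) : ℕ → ℝ
  | 0 => (N : ℝ) / 2
  | n + 1 =>
      let i : ℝ := (N : ℝ) - 1 - (n : ℝ)
      let t : ℝ := tAux N n
      let s : ℝ := (⌊t⌋ : ℝ)
      (s ^ 2 * (s + 1) + 2 * (i ^ 2 - s ^ 2) * t) / (2 * i * (i + 1))

/-- The equilibrium threshold sequence `t_i^{(N)}` of the two-sided secretary game,
for `0 ≤ i ≤ N-1`. -/
noncomputable def tgame (N i : ℕ) : ℝ := tAux N (N - 1 - i)

/-!
By downward induction on `i`, `0 ≤ t_i ≤ (i + √i) / √m` with `m = N - i + 3` as long as `i ≥ 81`,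
and `f N → ∞` eventually puts every index of the statement above `81`.
For `t ≥ 1` the numerator `s²(s+1) + 2(i² - s²)t` of the recurrence, piecewise linear in `t`,
lies below the curve `t (2i² - (t-1)²)` through its left limits at the integers; for `t < 1` it is
`2i²t`, at most the value of that curve at `1`. The curve increases on the relevant range, so it
suffices to evaluate it at `t = (i + √i) / √m` (if this is `< 1`, the bound `2i²t` suffices).
Replacing `√(i-1)` and `√(m+1)` by elementary bounds turns what remains into a polynomial
inequality in `√i` and `√m`.
-/

noncomputable def stepNumerator (i t : ℝ) : ℝ :=
  (⌊t⌋ : ℝ) ^ 2 * ((⌊t⌋ : ℝ) + 1) + 2 * (i ^ 2 - (⌊t⌋ : ℝ) ^ 2) * t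

noncomputable def thresholdStep (i t : ℝ) : ℝ := stepNumerator i t / (2 * i * (i + 1))

noncomputable def thresholdBound (i m : ℝ) : ℝ := (i + √i) / √m

def envelope (i t : ℝ) : ℝ := t * (2 * i ^ 2 - (t - 1) ^ 2)

lemma tAux_succ (N n : ℕ) : tAux N (n + 1) = thresholdStep ((N : ℝ) - 1 - n) (tAux N n) := rfl

lemma stepNumerator_le (i : ℝ) {t : ℝ} (ht : 0 ≤ t) : stepNumerator i t ≤ 2 * i ^ 2 * t := by
  rcases lt_or_ge t 1 with h1 | h1
  · simp [stepNumerator, Int.floor_eq_zero_iff.mpr ⟨ht, h1⟩]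
  · have hs : (⌊t⌋ : ℝ) ≤ t := Int.floor_le t
    unfold stepNumerator
    nlinarith [mul_nonneg (sq_nonneg (⌊t⌋ : ℝ)) (by linarith : (0 : ℝ) ≤ 2 * t - ⌊t⌋ - 1)]

lemma stepNumerator_le_envelope (i : ℝ) {t : ℝ} (ht : 1 ≤ t) :
    stepNumerator i t ≤ envelope i t := by
  have hs : (⌊t⌋ : ℝ) ≤ t := Int.floor_le t
  have hs1 : t - 1 < ⌊t⌋ := Int.sub_one_lt_floor t
  unfold stepNumerator envelope
  nlinarith [mul_nonneg (mul_nonneg (by linarith : (0 : ℝ) ≤ ⌊t⌋ - t + 1)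
      (by linarith : (0 : ℝ) ≤ t - ⌊t⌋)) (by linarith : (0 : ℝ) ≤ ⌊t⌋ + t - 1),
    mul_nonneg (mul_nonneg (by linarith : (0 : ℝ) ≤ ⌊t⌋ - t + 1) (by linarith : (0 : ℝ) ≤ t))
      (by linarith : (0 : ℝ) ≤ t - 1)]

lemma envelope_le_envelope (i : ℝ) {t C : ℝ} (ht : 1 ≤ t) (htC : t ≤ C)
    (hC : 3 * C ^ 2 ≤ 2 * i ^ 2) : envelope i t ≤ envelope i C := by
  unfold envelope
  nlinarith [mul_nonneg (sub_nonneg.2 htC)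
    (by nlinarith : (0 : ℝ) ≤ 2 * i ^ 2 - (C ^ 2 + C * t + t ^ 2 - 2 * C - 2 * t + 1))]

lemma stepNumerator_le_envelope_of_le (i : ℝ) {t C : ℝ} (ht : 0 ≤ t) (htC : t ≤ C) (hC : 1 ≤ C)
    (hCi : 3 * C ^ 2 ≤ 2 * i ^ 2) : stepNumerator i t ≤ envelope i C := by
  rcases lt_or_ge t 1 with h1 | h1
  · calc stepNumerator i t ≤ 2 * i ^ 2 * t := stepNumerator_le i ht
      _ ≤ envelope i 1 := by unfold envelope; nlinarith [sq_nonneg i]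
      _ ≤ envelope i C := envelope_le_envelope i le_rfl hC hCi
  · exact (stepNumerator_le_envelope i h1).trans (envelope_le_envelope i h1 htC hCi)

lemma cube_add_half_sub_one_le_mul_sqrt {a : ℝ} (ha : 2 ≤ a) :
    a ^ 3 + a / 2 - 1 ≤ (a ^ 2 + 1) * √(a ^ 2 - 1) := by
  rw [← Real.sqrt_sq (by positivity : (0 : ℝ) ≤ a ^ 2 + 1), ← Real.sqrt_mul (by positivity)]
  apply Real.le_sqrt_of_sq_le
  nlinarith [pow_le_pow_left₀ (by norm_num) ha 3]

lemma two_mul_mul_sqrt_sq_add_one_le (p : ℝ) : 2 * p * √(p ^ 2 + 1) ≤ 2 * p ^ 2 + 1 := by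
  have hq := Real.sq_sqrt (by positivity : (0 : ℝ) ≤ p ^ 2 + 1)
  nlinarith [sq_nonneg (√(p ^ 2 + 1) - p)]

/-- A lower bound for `2 i (i + 1) · thresholdBound (i - 1) (m + 1)` with `i = a²`, `m = p²`,
free of the square roots `√(i - 1)` and `√(m + 1)`. -/
noncomputable def numeratorBudget (a p : ℝ) : ℝ :=
  4 * a ^ 2 * p * (a ^ 4 + a ^ 3 + a / 2 - 2) / (2 * p ^ 2 + 1)

lemma numeratorBudget_le {a p : ℝ} (ha : 2 ≤ a) (hp : 0 < p) :
    numeratorBudget a p ≤ 2 * a ^ 2 * (a ^ 2 + 1) * thresholdBound (a ^ 2 - 1) (p ^ 2 + 1) := by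
  have hβ : a ^ 4 + a ^ 3 + a / 2 - 2 ≤ (a ^ 2 + 1) * (a ^ 2 - 1 + √(a ^ 2 - 1)) := by
    nlinarith [cube_add_half_sub_one_le_mul_sqrt ha]
  have hβ0 : 0 ≤ a ^ 4 + a ^ 3 + a / 2 - 2 := by nlinarith
  have hq : 0 < √(p ^ 2 + 1) := Real.sqrt_pos.2 (by positivity)
  rw [numeratorBudget, thresholdBound, div_le_iff₀ (by positivity), mul_div_assoc',
    div_mul_eq_mul_div, le_div_iff₀ hq]
  calc 4 * a ^ 2 * p * (a ^ 4 + a ^ 3 + a / 2 - 2) * √(p ^ 2 + 1)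
      = 2 * a ^ 2 * (a ^ 4 + a ^ 3 + a / 2 - 2) * (2 * p * √(p ^ 2 + 1)) := by ring
    _ ≤ 2 * a ^ 2 * ((a ^ 2 + 1) * (a ^ 2 - 1 + √(a ^ 2 - 1))) * (2 * p ^ 2 + 1) := by
      exact mul_le_mul (by gcongr) (two_mul_mul_sqrt_sq_add_one_le p) (by positivity)
        (mul_nonneg (by positivity) (hβ0.trans hβ))
    _ = _ := by ring

lemma linear_le_numeratorBudget {a p : ℝ} (ha : 6 ≤ a) (hp : a ^ 2 + a ≤ p) :
    2 * (a ^ 2) ^ 2 * ((a ^ 2 + a) / p) ≤ numeratorBudget a p := by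
  have hp0 : 0 < p := by nlinarith
  rw [numeratorBudget, mul_div_assoc', div_le_div_iff₀ hp0 (by positivity)]
  have key : a ^ 2 * (a ^ 2 + a) ≤ p ^ 2 * (a - 4) := by
    nlinarith [mul_le_mul hp hp (by positivity) hp0.le, pow_le_pow_left₀ (by norm_num) ha 3]
  nlinarith [mul_le_mul_of_nonneg_left key (by positivity : (0 : ℝ) ≤ 2 * a ^ 2)]

lemma envelope_le_numeratorBudget {a p : ℝ} (ha : 9 ≤ a) (hp : 0 < p) :
    envelope (a ^ 2) ((a ^ 2 + a) / p) ≤ numeratorBudget a p := by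
  set X := a ^ 2 + a with hX
  set A := a ^ 2 * (a - 4) + X
  have hA : 0 < A := by nlinarith
  have hdisc : X ^ 4 ≤ A * X * (X ^ 2 - a ^ 4) := by
    have h : X ^ 3 ≤ A * (X ^ 2 - a ^ 4) := by
      have : 0 ≤ a ^ 3 * (a * (a ^ 2 - 8 * a - 4)) := by
        have : 0 ≤ a ^ 2 - 8 * a - 4 := by nlinarith
        positivity
      simp only [A, hX]
      nlinarith
    nlinarith [mul_le_mul_of_nonneg_left h (by positivity : (0 : ℝ) ≤ X)]
  have hquad : 0 ≤ A * p ^ 2 - 2 * X ^ 2 * p + X * (X ^ 2 - a ^ 4) := by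
    nlinarith [sq_nonneg (A * p - X ^ 2)]
  rw [envelope, numeratorBudget, le_div_iff₀ (by positivity)]
  field_simp
  nlinarith [mul_nonneg (by positivity : (0 : ℝ) ≤ X) (sq_nonneg (X - p)),
    mul_nonneg (by positivity : (0 : ℝ) ≤ 2 * p ^ 2) hquad]

lemma thresholdStep_nonneg {i t : ℝ} (hi : 0 < i) (ht : 0 ≤ t) (hti : t ≤ i) :
    0 ≤ thresholdStep i t := by
  have hs : (⌊t⌋ : ℝ) ≤ t := Int.floor_le t
  have hs0 : (0 : ℝ) ≤ ⌊t⌋ := by exact_mod_cast Int.floor_nonneg.mpr ht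
  have : 0 ≤ i ^ 2 - (⌊t⌋ : ℝ) ^ 2 := by nlinarith
  unfold thresholdStep stepNumerator
  positivity

lemma thresholdBound_le_self {i m : ℝ} (hi : 1 ≤ i) (hm : 4 ≤ m) : thresholdBound i m ≤ i := by
  have h2 : 2 ≤ √m := by
    rw [show (2 : ℝ) = √4 by rw [show (4 : ℝ) = 2 ^ 2 by norm_num, Real.sqrt_sq zero_le_two]]
    exact Real.sqrt_le_sqrt hm
  have hsi : √i ≤ i := by
    rw [Real.sqrt_le_left (by linarith)]
    nlinarith
  rw [thresholdBound, div_le_iff₀ (by linarith)]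
  nlinarith

lemma thresholdStep_le_thresholdBound {i m t : ℝ} (hi : 81 ≤ i) (hm : 4 ≤ m) (ht0 : 0 ≤ t)
    (ht : t ≤ thresholdBound i m) : thresholdStep i t ≤ thresholdBound (i - 1) (m + 1) := by
  obtain ⟨a, ha0, rfl⟩ : ∃ a, 0 ≤ a ∧ a ^ 2 = i :=
    ⟨√i, Real.sqrt_nonneg i, Real.sq_sqrt (by linarith)⟩
  obtain ⟨p, hp0, rfl⟩ : ∃ p, 0 ≤ p ∧ p ^ 2 = m :=
    ⟨√m, Real.sqrt_nonneg m, Real.sq_sqrt (by linarith)⟩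
  rw [thresholdBound, Real.sqrt_sq ha0, Real.sqrt_sq hp0] at ht
  have ha : 9 ≤ a := by nlinarith
  have hp : 2 ≤ p := by nlinarith
  rw [thresholdStep, div_le_iff₀ (by positivity), mul_comm (thresholdBound _ _)]
  refine le_trans ?_ (numeratorBudget_le (by linarith) (by linarith))
  rcases le_or_gt 1 ((a ^ 2 + a) / p) with hC | hC
  · have hCa : 3 * ((a ^ 2 + a) / p) ^ 2 ≤ 2 * (a ^ 2) ^ 2 := by
      have : (a ^ 2 + a) / p ≤ (a ^ 2 + a) / 2 :=
        div_le_div_of_nonneg_left (by positivity) two_pos hp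
      nlinarith [pow_le_pow_left₀ (by linarith) this 2]
    exact (stepNumerator_le_envelope_of_le _ ht0 ht hC hCa).trans
      (envelope_le_numeratorBudget ha (by linarith))
  · have hXp : a ^ 2 + a ≤ p := ((div_lt_one (by linarith)).1 hC).le
    calc stepNumerator (a ^ 2) t ≤ 2 * (a ^ 2) ^ 2 * t := stepNumerator_le _ ht0
      _ ≤ 2 * (a ^ 2) ^ 2 * ((a ^ 2 + a) / p) := by gcongr
      _ ≤ numeratorBudget a p := linear_le_numeratorBudget (by linarith) hXp

lemma tAux_mem_Icc (N n : ℕ) (h : 81 ≤ (N : ℝ) - 1 - n) :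
    tAux N n ∈ Set.Icc 0 (thresholdBound ((N : ℝ) - 1 - n) (n + 4)) := by
  induction n with
  | zero =>
    have h1 : 1 ≤ √((N : ℝ) - 1) := Real.one_le_sqrt.2 (by push_cast at h; linarith)
    simp only [tAux, thresholdBound, CharP.cast_eq_zero, sub_zero, zero_add,
      show (4 : ℝ) = 2 ^ 2 by norm_num, Real.sqrt_sq zero_le_two]
    exact ⟨by positivity, by linarith⟩
  | succ n ih =>
    have hn : 81 ≤ (N : ℝ) - 1 - n := by push_cast at h; linarith
    obtain ⟨ih0, ih1⟩ := ih hn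
    have hle : tAux N n ≤ (N : ℝ) - 1 - n :=
      ih1.trans (thresholdBound_le_self (by linarith) (by linarith))
    rw [tAux_succ, show (N : ℝ) - 1 - ↑(n + 1) = (N : ℝ) - 1 - n - 1 by push_cast; ring,
      show ((n + 1 : ℕ) : ℝ) + 4 = (n + 4) + 1 by push_cast; ring]
    exact ⟨thresholdStep_nonneg (by linarith) ih0 hle,
      thresholdStep_le_thresholdBound hn (by linarith) ih0 ih1⟩

/-- Upper bound lemma: for any `f → ∞`, eventually `t_i ≤ (i + √i)/√(N − i + 3)`
for all `i` with `f(N) ≤ i ≤ N−1`. -/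
theorem threshold_upper_bound (f : ℕ → ℝ) (hf : Tendsto f atTop atTop) :
    ∃ N₀ : ℕ, ∀ N : ℕ, N₀ ≤ N → ∀ i : ℕ,
      f N ≤ (i : ℝ) → (i : ℝ) ≤ (N : ℝ) - 1 →
      tgame N i ≤ ((i : ℝ) + Real.sqrt i) / Real.sqrt ((N : ℝ) - i + 3) := by
  obtain ⟨N₀, hN₀⟩ := eventually_atTop.1 (hf.eventually_ge_atTop 81)
  refine ⟨N₀, fun N hN i hfi hiN => ?_⟩
  have hcast : ((N - 1 - i : ℕ) : ℝ) = (N : ℝ) - 1 - i := by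
    have : i + 1 ≤ N := by exact_mod_cast (by linarith : (i : ℝ) + 1 ≤ N)
    rw [Nat.cast_sub (by omega), Nat.cast_sub (by omega), Nat.cast_one]
  have key := (tAux_mem_Icc N (N - 1 - i) (by rw [hcast]; linarith [hN₀ N hN])).2
  rwa [hcast, show (N : ℝ) - 1 - (N - 1 - i) = i by ring,
    show (N : ℝ) - 1 - i + 4 = N - i + 3 by ring] at key
end

section
/- Let r ≥ 1 be an integer and let ρ be a real number with ρ > 1/(r+1). Define f : ℝ → ℝ by f(s) = (s/r)²·(s+1)/(r+1) + (1 − (s/r)²)·ρ. Then f attains its minimum over [0, ∞) at the unique point s* = (2/3)·((r+1)·ρ − 1); that is, f(s*) ≤ f(s) for all s ≥ 0, with equality only for s = s*. -/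
/-!
Clearing denominators, `f(s) = (s³ - a s²) / (r²(r+1)) + ρ` with `a = (r+1)ρ - 1 > 0`, so it
suffices to minimise the cubic `s³ - a s²` on `[0, ∞)`. Its critical point `2a/3` is a double
root of `s³ - a s² - c` for the critical value `c`, which gives the factorisation
`(s - 2a/3)² (s + a/3)`, nonnegative for `s ≥ 0` and zero only at `s = 2a/3`.
-/

noncomputable def roundObjective (r ρ s : ℝ) : ℝ :=
  (s / r) ^ 2 * (s + 1) / (r + 1) + (1 - (s / r) ^ 2) * ρ

theorem roundObjective_eq (r ρ s : ℝ) (hr : r ≠ 0) (hr₁ : r + 1 ≠ 0) :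
    roundObjective r ρ s = (s ^ 3 - ((r + 1) * ρ - 1) * s ^ 2) / (r ^ 2 * (r + 1)) + ρ := by
  unfold roundObjective
  field_simp
  ring

theorem cubic_sub_cubic_critical (a s : ℝ) :
    s ^ 3 - a * s ^ 2 - ((2 / 3 * a) ^ 3 - a * (2 / 3 * a) ^ 2) =
      (s - 2 / 3 * a) ^ 2 * (s + a / 3) := by
  ring

theorem cubic_critical_le {a s : ℝ} (ha : 0 ≤ a) (hs : 0 ≤ s) :
    (2 / 3 * a) ^ 3 - a * (2 / 3 * a) ^ 2 ≤ s ^ 3 - a * s ^ 2 := by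
  rw [← sub_nonneg, cubic_sub_cubic_critical]
  exact mul_nonneg (sq_nonneg _) (by linarith)

theorem cubic_critical_lt {a s : ℝ} (ha : 0 ≤ a) (hs : 0 ≤ s) (hne : s ≠ 2 / 3 * a) :
    (2 / 3 * a) ^ 3 - a * (2 / 3 * a) ^ 2 < s ^ 3 - a * s ^ 2 := by
  have hpos : 0 < s + a / 3 := by
    rcases hs.lt_or_eq with hs | rfl
    · linarith
    · have : a ≠ 0 := fun h => hne (by simp [h])
      positivity
  rw [← sub_pos, cubic_sub_cubic_critical]
  exact mul_pos (sq_pos_of_ne_zero (sub_ne_zero.mpr hne)) hpos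

theorem roundObjective_critical_le {r ρ s : ℝ} (hr : 0 < r) (ha : 0 ≤ (r + 1) * ρ - 1)
    (hs : 0 ≤ s) :
    roundObjective r ρ (2 / 3 * ((r + 1) * ρ - 1)) ≤ roundObjective r ρ s := by
  have hr₁ : r + 1 ≠ 0 := by positivity
  rw [roundObjective_eq _ _ _ hr.ne' hr₁, roundObjective_eq _ _ _ hr.ne' hr₁]
  gcongr ?_ / _ + _
  exact cubic_critical_le ha hs

theorem roundObjective_critical_lt {r ρ s : ℝ} (hr : 0 < r) (ha : 0 ≤ (r + 1) * ρ - 1)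
    (hs : 0 ≤ s) (hne : s ≠ 2 / 3 * ((r + 1) * ρ - 1)) :
    roundObjective r ρ (2 / 3 * ((r + 1) * ρ - 1)) < roundObjective r ρ s := by
  have hr₁ : r + 1 ≠ 0 := by positivity
  rw [roundObjective_eq _ _ _ hr.ne' hr₁, roundObjective_eq _ _ _ hr.ne' hr₁]
  gcongr ?_ / _ + _
  exact cubic_critical_lt ha hs hne

/-- In the cooperative two-sided secretary game, the one-round objective
`f(s) = (s/r)²(s+1)/(r+1) + (1 − (s/r)²)ρ`, with `ρ > 1/(r+1)`, attains its minimum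
over `[0, ∞)` at the unique point `s* = (2/3)((r+1)ρ − 1)`. -/
theorem cooperative_threshold_minimizer (r : ℕ) (hr : 1 ≤ r) (ρ : ℝ)
    (hρ : ρ > 1 / ((r : ℝ) + 1)) :
    ∀ s : ℝ, 0 ≤ s →
      ((2 / 3 * (((r : ℝ) + 1) * ρ - 1)) / (r : ℝ)) ^ 2 *
            (2 / 3 * (((r : ℝ) + 1) * ρ - 1) + 1) / ((r : ℝ) + 1) +
          (1 - ((2 / 3 * (((r : ℝ) + 1) * ρ - 1)) / (r : ℝ)) ^ 2) * ρ ≤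
        (s / (r : ℝ)) ^ 2 * (s + 1) / ((r : ℝ) + 1) + (1 - (s / (r : ℝ)) ^ 2) * ρ ∧
      (((2 / 3 * (((r : ℝ) + 1) * ρ - 1)) / (r : ℝ)) ^ 2 *
            (2 / 3 * (((r : ℝ) + 1) * ρ - 1) + 1) / ((r : ℝ) + 1) +
          (1 - ((2 / 3 * (((r : ℝ) + 1) * ρ - 1)) / (r : ℝ)) ^ 2) * ρ =
        (s / (r : ℝ)) ^ 2 * (s + 1) / ((r : ℝ) + 1) + (1 - (s / (r : ℝ)) ^ 2) * ρ →
        s = 2 / 3 * (((r : ℝ) + 1) * ρ - 1)) := by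
  intro s hs
  have hr₀ : (0 : ℝ) < r := by exact_mod_cast hr
  have ha : 0 ≤ ((r : ℝ) + 1) * ρ - 1 := by
    have := (div_lt_iff₀ (by positivity : (0 : ℝ) < r + 1)).mp hρ
    linarith
  refine ⟨roundObjective_critical_le hr₀ ha hs, fun heq => ?_⟩
  by_contra hne
  exact (roundObjective_critical_lt hr₀ ha hs hne).ne heq
end
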